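/- arXiv:2203.13514 — 6 statements merged into one kernel-verified Lean document; each statement's English description precedes it below -/
import Mathlib

section
/- Let E be a real inner product space of dimension 2, let x₀ ∈ E, and let f : E → ℝ be strongly differentiable at x₀ with gradient g. For points a, b, c ∈ E that are not collinear, let ā be the reflection of a across the affine span of {b, c}, and set r̄(a,b,c) = ((f(ā) − f(a))/‖ā − a‖²) • (ā − a) + ((f(c) − f(b))/‖c − b‖²) • (c − b). Then for every ε > 0 there exists δ > 0 such that whenever a, b, c ∈ E are not collinear and ‖a − x₀‖ < δ, ‖b − x₀‖ < δ, ‖c − x₀‖ < δ, one has ‖r̄(a,b,c) − g‖ < ε; in other words, r̄(a,b,c) tends to g as the non-degenerate triangle with vertices a, b, c contracts to x₀. -/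
/-!
Put `ā = mirror {b, c} a`, `u = ā - a` and `v = c - b`. Since `ā - a` is normal to the line `bc`,
`u ⟂ v`, and for a non-degenerate triangle both are nonzero, so they form an orthogonal basis of
the plane. In that basis the components of `r̄(a,b,c) - g` are
`(f ā - f a - ⟪g, u⟫) / ‖u‖` and `(f c - f b - ⟪g, v⟫) / ‖v‖`, which strong differentiability
makes small as soon as `a, b, c, ā` are close to `x₀`; and `ā` is, because the reflection fixes `b`,
so `‖ā - b‖ = ‖a - b‖`.
-/

open EuclideanGeometry
open scoped InnerProductSpace

/-- Orthogonal reflection of the point `p` across the affine span of the set `s`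
(Mathlib's `EuclideanGeometry.reflection`), extended by the identity if `s` is empty. -/
noncomputable def mirror {E : Type*} [NormedAddCommGroup E] [InnerProductSpace ℝ E]
    [FiniteDimensional ℝ E] (s : Set E) (p : E) : E :=
  open scoped Classical in
  if hs : s.Nonempty then
    haveI : Nonempty (affineSpan ℝ s) := ((affineSpan_nonempty ℝ (s := s)).mpr hs).to_subtype
    EuclideanGeometry.reflection (affineSpan ℝ s) p
  else p

section OrthogonalPair

variable {E : Type*} [NormedAddCommGroup E] [InnerProductSpace ℝ E] {u v : E}

theorem eq_smul_add_smul_of_inner_eq_zero_of_span_eq_top (huv : ⟪u, v⟫_ℝ = 0)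
    (hspan : Submodule.span ℝ {u, v} = ⊤) (w : E) :
    w = (⟪u, w⟫_ℝ / ‖u‖ ^ 2) • u + (⟪v, w⟫_ℝ / ‖v‖ ^ 2) • v := by
  have hvu : ⟪v, u⟫_ℝ = 0 := by rwa [real_inner_comm]
  have coeff (x : E) : ⟪x, w⟫_ℝ / ‖x‖ ^ 2 * ‖x‖ ^ 2 = ⟪x, w⟫_ℝ :=
    div_mul_cancel_of_imp fun hx => by simp [(by simpa using hx : x = 0)]
  refine ext_inner_right ℝ fun x => LinearMap.congr_fun (LinearMap.ext_on hspan ?_ :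
    innerₛₗ ℝ w = innerₛₗ ℝ _) x
  rintro x (rfl | rfl) <;>
    simp only [innerₛₗ_apply_apply, inner_add_left, real_inner_smul_left,
      real_inner_self_eq_norm_sq, huv, hvu, real_inner_comm x w, coeff, mul_zero, add_zero, zero_add]

theorem norm_le_of_inner_eq_zero_of_span_eq_top (huv : ⟪u, v⟫_ℝ = 0)
    (hspan : Submodule.span ℝ {u, v} = ⊤) (w : E) :
    ‖w‖ ≤ |⟪u, w⟫_ℝ| / ‖u‖ + |⟪v, w⟫_ℝ| / ‖v‖ := by
  have norm_coeff_smul (t : ℝ) (x : E) : ‖(t / ‖x‖ ^ 2) • x‖ = |t| / ‖x‖ := by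
    rcases eq_or_ne x 0 with rfl | hx
    · simp
    · rw [norm_smul, Real.norm_eq_abs, abs_div, abs_of_nonneg (sq_nonneg ‖x‖)]
      field_simp
  calc ‖w‖ = ‖(⟪u, w⟫_ℝ / ‖u‖ ^ 2) • u + (⟪v, w⟫_ℝ / ‖v‖ ^ 2) • v‖ :=
        congrArg norm (eq_smul_add_smul_of_inner_eq_zero_of_span_eq_top huv hspan w)
    _ ≤ _ := norm_add_le _ _
    _ = _ := by rw [norm_coeff_smul, norm_coeff_smul]

theorem norm_smul_add_smul_sub_le (hu : u ≠ 0) (hv : v ≠ 0) (huv : ⟪u, v⟫_ℝ = 0)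
    (hspan : Submodule.span ℝ {u, v} = ⊤) {α β ε : ℝ} {g : E}
    (hα : |α - ⟪g, u⟫_ℝ| ≤ ε * ‖u‖) (hβ : |β - ⟪g, v⟫_ℝ| ≤ ε * ‖v‖) :
    ‖(α / ‖u‖ ^ 2) • u + (β / ‖v‖ ^ 2) • v - g‖ ≤ 2 * ε := by
  have hvu : ⟪v, u⟫_ℝ = 0 := by rwa [real_inner_comm]
  have div_sq_mul_sq (x : E) (hx : x ≠ 0) (t : ℝ) : t / ‖x‖ ^ 2 * ‖x‖ ^ 2 = t := by
    field_simp [norm_ne_zero_iff.mpr hx]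
  have hu' : ⟪u, (α / ‖u‖ ^ 2) • u + (β / ‖v‖ ^ 2) • v - g⟫_ℝ = α - ⟪g, u⟫_ℝ := by
    simp [inner_sub_right, inner_add_right, real_inner_smul_right, huv,
      div_sq_mul_sq u hu, real_inner_comm g u]
  have hv' : ⟪v, (α / ‖u‖ ^ 2) • u + (β / ‖v‖ ^ 2) • v - g⟫_ℝ = β - ⟪g, v⟫_ℝ := by
    simp [inner_sub_right, inner_add_right, real_inner_smul_right, hvu,
      div_sq_mul_sq v hv, real_inner_comm g v]
  calc _ ≤ |α - ⟪g, u⟫_ℝ| / ‖u‖ + |β - ⟪g, v⟫_ℝ| / ‖v‖ := by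
        rw [← hu', ← hv']
        exact norm_le_of_inner_eq_zero_of_span_eq_top huv hspan _
    _ ≤ ε + ε := add_le_add ((div_le_iff₀ (norm_pos_iff.mpr hu)).mpr hα)
        ((div_le_iff₀ (norm_pos_iff.mpr hv)).mpr hβ)
    _ = 2 * ε := by ring

theorem span_pair_eq_top_of_inner_eq_zero (hdim : Module.finrank ℝ E = 2) (hu : u ≠ 0)
    (hv : v ≠ 0) (huv : ⟪u, v⟫_ℝ = 0) : Submodule.span ℝ {u, v} = ⊤ := by
  have hli : LinearIndependent ℝ ![u, v] := by
    refine linearIndependent_of_ne_zero_of_inner_eq_zero (fun i => ?_) fun i j hij => ?_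
    · fin_cases i <;> assumption
    · fin_cases i <;> fin_cases j <;> simp_all [real_inner_comm u v]
  rw [← Matrix.range_cons_cons_empty u v ![]]
  exact hli.span_eq_top_of_card_eq_finrank (by simp [hdim])

end OrthogonalPair

theorem EuclideanGeometry.reflection_vsub_self_mem_direction_orthogonal {V P : Type*}
    [NormedAddCommGroup V] [InnerProductSpace ℝ V] [MetricSpace P] [NormedAddTorsor V P]
    (s : AffineSubspace ℝ P) [Nonempty s] [s.direction.HasOrthogonalProjection] (p : P) :
    reflection s p -ᵥ p ∈ s.directionᗮ := by
  rw [reflection_apply', vadd_vsub_assoc]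
  exact add_mem (orthogonalProjection_vsub_mem_direction_orthogonal s p)
    (orthogonalProjection_vsub_mem_direction_orthogonal s p)

section Mirror

variable {E : Type*} [NormedAddCommGroup E] [InnerProductSpace ℝ E] [FiniteDimensional ℝ E]

theorem mirror_pair_eq_reflection (a b c : E) : mirror {b, c} a = reflection line[ℝ, b, c] a :=
  dif_pos ⟨b, by simp⟩

theorem inner_mirror_pair_sub_self (a b c : E) : ⟪mirror {b, c} a - a, c - b⟫_ℝ = 0 := by
  rw [mirror_pair_eq_reflection]
  exact (Submodule.mem_orthogonal' _ _).mp
    (reflection_vsub_self_mem_direction_orthogonal line[ℝ, b, c] a) _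
    (AffineSubspace.vsub_mem_direction (right_mem_affineSpan_pair ℝ b c)
      (left_mem_affineSpan_pair ℝ b c))

theorem mirror_pair_ne_self {a b c : E} (h : ¬Collinear ℝ {a, b, c}) : mirror {b, c} a ≠ a := by
  rw [mirror_pair_eq_reflection, Ne, reflection_eq_self_iff]
  exact fun ha => h (collinear_insert_of_mem_affineSpan_pair ha)

theorem norm_mirror_pair_sub_le (a b c x₀ : E) :
    ‖mirror {b, c} a - x₀‖ ≤ ‖a - x₀‖ + 2 * ‖b - x₀‖ := by
  have hb : dist (mirror {b, c} a) b = dist a b := by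
    rw [mirror_pair_eq_reflection, dist_comm,
      dist_reflection_eq_of_mem _ (left_mem_affineSpan_pair ℝ b c), dist_comm]
  simp only [← dist_eq_norm] at hb ⊢
  linarith [dist_triangle (mirror {b, c} a) b x₀, dist_triangle a x₀ b, dist_comm x₀ b]

end Mirror

/-- If `f : E → ℝ` (with `dim E = 2`) is strongly differentiable at `x₀` with gradient `g`,
then the mean multi-difference quotient
`r̄(a,b,c) = ((f ā − f a)/‖ā − a‖²) • (ā − a) + ((f c − f b)/‖c − b‖²) • (c − b)`,
where `ā` is the reflection of `a` across the affine span of `{b, c}`,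
converges to `g` as the non-degenerate triangle with vertices `a`, `b`, `c`
contracts to `x₀`. -/
theorem mean_secant_plane_tendsto_gradient_dim2
    {E : Type*} [NormedAddCommGroup E] [InnerProductSpace ℝ E] [FiniteDimensional ℝ E]
    (hdim : Module.finrank ℝ E = 2) (x₀ : E) (f : E → ℝ) (g : E)
    (hf : ∀ ε > (0 : ℝ), ∃ δ > (0 : ℝ), ∀ u v : E,
      ‖u - x₀‖ < δ → ‖v - x₀‖ < δ → |f u - f v - ⟪g, u - v⟫_ℝ| ≤ ε * ‖u - v‖) :
    ∀ ε > (0 : ℝ), ∃ δ > (0 : ℝ), ∀ a b c : E,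
      ¬ Collinear ℝ ({a, b, c} : Set E) →
      ‖a - x₀‖ < δ → ‖b - x₀‖ < δ → ‖c - x₀‖ < δ →
      ‖(((f (mirror {b, c} a) - f a) / ‖mirror {b, c} a - a‖ ^ 2) • (mirror {b, c} a - a) +
          ((f c - f b) / ‖c - b‖ ^ 2) • (c - b)) - g‖ < ε := by
  intro ε hε
  obtain ⟨δ, hδ, hfδ⟩ := hf (ε / 3) (by positivity)
  refine ⟨δ / 3, by positivity, fun a b c habc ha hb hc => ?_⟩
  have hā : ‖mirror {b, c} a - x₀‖ < δ := by linarith [norm_mirror_pair_sub_le a b c x₀]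
  have hu : mirror {b, c} a - a ≠ 0 := sub_ne_zero.mpr (mirror_pair_ne_self habc)
  have hv : c - b ≠ 0 := sub_ne_zero.mpr (ne₂₃_of_not_collinear habc).symm
  have huv := inner_mirror_pair_sub_self a b c
  have hbound := norm_smul_add_smul_sub_le hu hv huv
    (span_pair_eq_top_of_inner_eq_zero hdim hu hv huv)
    (hfδ _ _ hā (by linarith)) (hfδ _ _ (by linarith) (by linarith))
  linarith
end

section
/- Let E be a real inner product space of dimension 3, let x₀ ∈ E, and let f : E → ℝ be strongly differentiable at x₀ with gradient g. For affinely independent points a₁, a₂, a₃, a₄ ∈ E, let ā₁ be the reflection of a₁ across the affine span of {a₂, a₃, a₄} and ā₂ the reflection of a₂ across the affine span of {a₃, a₄}, and set r̄(a₁,a₂,a₃,a₄) = ((f(ā₁) − f(a₁))/‖ā₁ − a₁‖²) • (ā₁ − a₁) + ((f(ā₂) − f(a₂))/‖ā₂ − a₂‖²) • (ā₂ − a₂) + ((f(a₄) − f(a₃))/‖a₄ − a₃‖²) • (a₄ − a₃). Then for every ε > 0 there exists δ > 0 such that whenever a₁, a₂, a₃, a₄ are affinely independent and ‖aᵢ −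 x₀‖ < δ for i = 1,2,3,4, one has ‖r̄(a₁,a₂,a₃,a₄) − g‖ < ε; in other words, r̄ tends to g as the non-degenerate tetrahedron with vertices a₁, a₂, a₃, a₄ contracts to x₀. -/
open EuclideanGeometry
open scoped InnerProductSpace

/-! The secant directions `ā₁ - a₁`, `ā₂ - a₂`, `a₄ - a₃` are pairwise orthogonal: `ā₁ - a₁` is
normal to the plane `a₂a₃a₄`, which contains the other two, and `ā₂ - a₂` is normal to the line
`a₃a₄`. Affine independence makes them nonzero, so in dimension 3 they form an orthogonal basis,
in which `r̄` has the components `(f b - f a) / ‖b - a‖` along the secant from `a` to `b`.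
Expanding `g` in the same basis, strong differentiability bounds every component of `r̄ - g` by
`ε`, because the reflected points stay within three times the size of the tetrahedron. -/

section OrthogonalExpansion

variable {E : Type*} [NormedAddCommGroup E] [InnerProductSpace ℝ E] [FiniteDimensional ℝ E]
  {ι : Type*} [Fintype ι] {v : ι → E}

theorem sum_inner_div_norm_sq_smul_eq_self (hv : ∀ i, v i ≠ 0)
    (horth : Pairwise fun i j => ⟪v i, v j⟫_ℝ = 0) (hcard : Fintype.card ι = Module.finrank ℝ E)
    (x : E) : ∑ i, (⟪x, v i⟫_ℝ / ‖v i‖ ^ 2) • v i = x := by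
  let b := basisOfLinearIndependentOfCardEqFinrank' v
    (linearIndependent_of_ne_zero_of_inner_eq_zero hv horth) hcard
  refine InnerProductSpace.ext_inner_left_basis b fun j => ?_
  simp only [b, coe_basisOfLinearIndependentOfCardEqFinrank', inner_sum, real_inner_smul_right]
  rw [Finset.sum_eq_single j (fun i _ hij => by rw [horth hij.symm, mul_zero]) (by simp),
    real_inner_self_eq_norm_sq, div_mul_cancel₀ _ (by simpa using hv j), real_inner_comm]

theorem norm_sum_div_norm_sq_smul_sub_le (hv : ∀ i, v i ≠ 0)
    (horth : Pairwise fun i j => ⟪v i, v j⟫_ℝ = 0) (hcard : Fintype.card ι = Module.finrank ℝ E)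
    (d : ι → ℝ) (g : E) {c : ℝ} (hd : ∀ i, |d i - ⟪g, v i⟫_ℝ| ≤ c * ‖v i‖) :
    ‖∑ i, (d i / ‖v i‖ ^ 2) • v i - g‖ ≤ Fintype.card ι * c := by
  conv_lhs => rw [← sum_inner_div_norm_sq_smul_eq_self hv horth hcard g, ← Finset.sum_sub_distrib]
  calc ‖∑ i, ((d i / ‖v i‖ ^ 2) • v i - (⟪g, v i⟫_ℝ / ‖v i‖ ^ 2) • v i)‖
      ≤ ∑ i, ‖(d i / ‖v i‖ ^ 2) • v i - (⟪g, v i⟫_ℝ / ‖v i‖ ^ 2) • v i‖ := norm_sum_le _ _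
    _ ≤ ∑ _i : ι, c := Finset.sum_le_sum fun i _ => ?_
    _ = Fintype.card ι * c := by simp
  have hvi : 0 < ‖v i‖ := norm_pos_iff.mpr (hv i)
  rw [← sub_smul, ← sub_div, norm_smul, Real.norm_eq_abs, abs_div, abs_of_pos (pow_pos hvi 2),
    pow_two, div_mul_eq_mul_div, mul_div_mul_right _ _ hvi.ne', div_le_iff₀ hvi]
  exact hd i

end OrthogonalExpansion

section Mirror

variable {E : Type*} [NormedAddCommGroup E] [InnerProductSpace ℝ E] [FiniteDimensional ℝ E]
  {s : Set E}

theorem mirror_eq_reflection [Nonempty (affineSpan ℝ s)] (p : E) :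
    mirror s p = reflection (affineSpan ℝ s) p := by
  rw [mirror, dif_pos ((affineSpan_nonempty ℝ).mp (Set.nonempty_coe_sort.mp ‹_›))]

theorem mirror_of_empty (p : E) : mirror ∅ p = p := by
  simp [mirror]

theorem mirror_sub_self_mem_orthogonal (s : Set E) (p : E) :
    mirror s p - p ∈ (affineSpan ℝ s).directionᗮ := by
  rcases s.eq_empty_or_nonempty with rfl | hs
  · simp [mirror_of_empty]
  have := hs.to_subtype
  have hproj := vsub_orthogonalProjection_mem_direction_orthogonal (affineSpan ℝ s) p
  have hrefl : mirror s p - p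
      = (-2 : ℝ) • (p -ᵥ (orthogonalProjection (affineSpan ℝ s) p : E)) := by
    rw [mirror_eq_reflection, reflection_apply']
    simp only [vsub_eq_sub, vadd_eq_add]
    module
  rw [hrefl]
  exact Submodule.smul_mem _ _ hproj

theorem mirror_sub_self_mem_direction {t : AffineSubspace ℝ E} (hst : affineSpan ℝ s ≤ t)
    {p : E} (hp : p ∈ t) : mirror s p - p ∈ t.direction := by
  rcases s.eq_empty_or_nonempty with rfl | hs
  · simp [mirror_of_empty]
  have := hs.to_subtype
  rw [mirror_eq_reflection]
  exact t.vsub_mem_direction (reflection_mem_of_le_of_mem hst hp) hp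

theorem dist_mirror_le {q : E} (hq : q ∈ affineSpan ℝ s) (p x : E) :
    dist (mirror s p) x ≤ dist p x + 2 * dist q x := by
  have : Nonempty (affineSpan ℝ s) := ⟨⟨q, hq⟩⟩
  rw [mirror_eq_reflection]
  have hqp := dist_reflection_eq_of_mem _ hq p
  linarith [dist_triangle (reflection (affineSpan ℝ s) p) q x,
    dist_comm (reflection (affineSpan ℝ s) p) q, dist_triangle q x p, dist_comm x p]

theorem mirror_ne_self (hs : s.Nonempty) {p : E} (hp : p ∉ affineSpan ℝ s) : mirror s p ≠ p := by
  have := hs.to_subtype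
  rw [mirror_eq_reflection]
  exact fun h => hp ((reflection_eq_self_iff p).mp h)

end Mirror

section Tetrahedron

variable {E : Type*} [NormedAddCommGroup E] [InnerProductSpace ℝ E] [FiniteDimensional ℝ E]
  {a₁ a₂ a₃ a₄ : E}

/-- The secants of `r̄` run from `secantStart i` to `secantEnd i`: from `a₁` to `ā₁`,
from `a₂` to `ā₂` and from `a₃` to `a₄`. -/
noncomputable def secantEnd (a₁ a₂ a₃ a₄ : E) : Fin 3 → E :=
  ![mirror {a₂, a₃, a₄} a₁, mirror {a₃, a₄} a₂, a₄]

def secantStart (a₁ a₂ a₃ : E) : Fin 3 → E :=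
  ![a₁, a₂, a₃]

theorem pairwise_inner_secant_eq_zero (a₁ a₂ a₃ a₄ : E) :
    Pairwise fun i j => ⟪secantEnd a₁ a₂ a₃ a₄ i - secantStart a₁ a₂ a₃ i,
      secantEnd a₁ a₂ a₃ a₄ j - secantStart a₁ a₂ a₃ j⟫_ℝ = 0 := by
  set S₁ := affineSpan ℝ ({a₂, a₃, a₄} : Set E)
  set S₂ := affineSpan ℝ ({a₃, a₄} : Set E)
  have hS : S₂ ≤ S₁ := affineSpan_mono ℝ (Set.subset_insert _ _)
  have ha₂ : a₂ ∈ S₁ := subset_affineSpan ℝ _ (by simp)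
  have hv₁ : mirror {a₂, a₃, a₄} a₁ - a₁ ∈ S₁.directionᗮ := mirror_sub_self_mem_orthogonal _ _
  have hv₂ : mirror {a₃, a₄} a₂ - a₂ ∈ S₂.directionᗮ := mirror_sub_self_mem_orthogonal _ _
  have hv₂' : mirror {a₃, a₄} a₂ - a₂ ∈ S₁.direction := mirror_sub_self_mem_direction hS ha₂
  have hv₃ : a₄ - a₃ ∈ S₂.direction :=
    S₂.vsub_mem_direction (subset_affineSpan ℝ _ (by simp)) (subset_affineSpan ℝ _ (by simp))
  have h₁₂ := Submodule.inner_right_of_mem_orthogonal hv₂' hv₁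
  have h₁₃ := Submodule.inner_right_of_mem_orthogonal (AffineSubspace.direction_le hS hv₃) hv₁
  have h₂₃ := Submodule.inner_right_of_mem_orthogonal hv₃ hv₂
  intro i j hij
  fin_cases i <;> fin_cases j <;> simp_all [secantEnd, secantStart, real_inner_comm]

theorem secantEnd_ne_secantStart (h : AffineIndependent ℝ ![a₁, a₂, a₃, a₄]) (i : Fin 3) :
    secantEnd a₁ a₂ a₃ a₄ i ≠ secantStart a₁ a₂ a₃ i := by
  fin_cases i
  · exact mirror_ne_self (by simp) (by
      simpa [Set.image_insert_eq] using h.notMem_affineSpan_sdiff 0 {1, 2, 3})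
  · exact mirror_ne_self (by simp) (by
      simpa [Set.image_insert_eq] using h.notMem_affineSpan_sdiff 1 {2, 3})
  · simpa [secantEnd, secantStart] using h.injective.ne (show (3 : Fin 4) ≠ 2 by decide)

theorem norm_secant_sub_lt {x : E} {r : ℝ} (h₁ : ‖a₁ - x‖ < r / 3) (h₂ : ‖a₂ - x‖ < r / 3)
    (h₃ : ‖a₃ - x‖ < r / 3) (h₄ : ‖a₄ - x‖ < r / 3) (i : Fin 3) :
    ‖secantEnd a₁ a₂ a₃ a₄ i - x‖ < r ∧ ‖secantStart a₁ a₂ a₃ i - x‖ < r := by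
  simp only [← dist_eq_norm] at *
  have hr : 0 < r := by linarith [dist_nonneg.trans_lt h₁]
  fin_cases i
  · have := dist_mirror_le (q := a₂) (subset_affineSpan ℝ {a₂, a₃, a₄} (by simp)) a₁ x
    constructor <;> simp [secantEnd, secantStart] <;> linarith
  · have := dist_mirror_le (q := a₃) (subset_affineSpan ℝ {a₃, a₄} (by simp)) a₂ x
    constructor <;> simp [secantEnd, secantStart] <;> linarith
  · constructor <;> simp [secantEnd, secantStart] <;> linarith

end Tetrahedron

/-- If `f : E → ℝ` (with `dim E = 3`) is strongly differentiable at `x₀` with gradient `g`,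
then the mean multi-difference quotient
`r̄ = ((f ā₁ − f a₁)/‖ā₁ − a₁‖²) • (ā₁ − a₁) + ((f ā₂ − f a₂)/‖ā₂ − a₂‖²) • (ā₂ − a₂)
    + ((f a₄ − f a₃)/‖a₄ − a₃‖²) • (a₄ − a₃)`,
where `ā₁` is the reflection of `a₁` across the affine span of `{a₂, a₃, a₄}` and `ā₂` the
reflection of `a₂` across the affine span of `{a₃, a₄}`, converges to `g` as the non-degenerate
tetrahedron with vertices `a₁, a₂, a₃, a₄` contracts to `x₀`. -/
theorem mean_secant_hyperplane_tendsto_gradient_dim3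
    {E : Type*} [NormedAddCommGroup E] [InnerProductSpace ℝ E] [FiniteDimensional ℝ E]
    (hdim : Module.finrank ℝ E = 3) (x₀ : E) (f : E → ℝ) (g : E)
    (hf : ∀ ε > (0 : ℝ), ∃ δ > (0 : ℝ), ∀ u v : E,
      ‖u - x₀‖ < δ → ‖v - x₀‖ < δ → |f u - f v - ⟪g, u - v⟫_ℝ| ≤ ε * ‖u - v‖) :
    ∀ ε > (0 : ℝ), ∃ δ > (0 : ℝ), ∀ a₁ a₂ a₃ a₄ : E,
      AffineIndependent ℝ ![a₁, a₂, a₃, a₄] →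
      ‖a₁ - x₀‖ < δ → ‖a₂ - x₀‖ < δ → ‖a₃ - x₀‖ < δ → ‖a₄ - x₀‖ < δ →
      ‖(((f (mirror {a₂, a₃, a₄} a₁) - f a₁) / ‖mirror {a₂, a₃, a₄} a₁ - a₁‖ ^ 2) •
            (mirror {a₂, a₃, a₄} a₁ - a₁) +
          ((f (mirror {a₃, a₄} a₂) - f a₂) / ‖mirror {a₃, a₄} a₂ - a₂‖ ^ 2) •
            (mirror {a₃, a₄} a₂ - a₂) +
          ((f a₄ - f a₃) / ‖a₄ - a₃‖ ^ 2) • (a₄ - a₃)) - g‖ < ε := by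
  intro ε hε
  obtain ⟨δ, hδ, hδf⟩ := hf (ε / 4) (by positivity)
  refine ⟨δ / 3, by positivity, fun a₁ a₂ a₃ a₄ hind h₁ h₂ h₃ h₄ => ?_⟩
  set p := secantEnd a₁ a₂ a₃ a₄
  set q := secantStart a₁ a₂ a₃
  have hbound := norm_sum_div_norm_sq_smul_sub_le (v := fun i => p i - q i)
    (fun i => sub_ne_zero.mpr (secantEnd_ne_secantStart hind i))
    (pairwise_inner_secant_eq_zero a₁ a₂ a₃ a₄) (by simp [hdim]) (fun i => f (p i) - f (q i)) g
    fun i => hδf _ _ (norm_secant_sub_lt h₁ h₂ h₃ h₄ i).1 (norm_secant_sub_lt h₁ h₂ h₃ h₄ i).2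
  simp only [Fin.sum_univ_three, Fintype.card_fin, Nat.cast_ofNat, p, q, secantEnd, secantStart,
    Matrix.cons_val_zero, Matrix.cons_val_one, Matrix.cons_val] at hbound
  linarith
end

section
/- Let n ≥ 2, let E be a finite-dimensional real inner product space, and let a₁, …, a_{n+1} ∈ E be affinely independent. For 1 ≤ i ≤ n−1 let āᵢ be the reflection of aᵢ across the affine span of a_{i+1}, …, a_{n+1}. Then in the exterior algebra of E one has (ā₁ − a₁) ∧ (ā₂ − a₂) ∧ ⋯ ∧ (ā_{n−1} − a_{n−1}) ∧ (a_{n+1} − aₙ) = 2^{n−1} • ((a₂ − a₁) ∧ (a₃ − a₁) ∧ ⋯ ∧ (a_{n+1} − a₁)), where each wedge product is the ordered product of the corresponding ι-images in ExteriorAlgebra ℝ E. -/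
open EuclideanGeometry ExteriorAlgebra

/-- Given points `a 0, …, a n` (the paper's `a₁, …, a_{n+1}`), `mirrored n a i` (for
`i : Fin (n-1)`, the paper's index `i+1 ∈ {1, …, n−1}`) is the reflection of the point `a i`
across the affine span of the points `a j`, `j > i`. -/
noncomputable def mirrored {E : Type*} [NormedAddCommGroup E] [InnerProductSpace ℝ E]
    [FiniteDimensional ℝ E] (n : ℕ) (a : Fin (n + 1) → E) (i : Fin (n - 1)) : E :=
  mirror (a '' {j | Fin.castLE (by omega) i < j}) (a (Fin.castLE (by omega) i))

/-!
Put `w k = a_{n+1} - a_k`. Because `a_{n+1}` lies on the mirror of `a_k`, the vector `ā_k - a_k`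
is `2 w_k` plus a vector in the direction of the mirror, which is spanned by the later `w j`.
A triangular change of vectors multiplies a wedge product by the product of the diagonal
coefficients, so the left-hand side is `2^{n-1} w_1 ∧ ⋯ ∧ w_n`. Two further unitriangular changes
replace the `w k` by the edges `a_{k+1} - a_k` and then by the spokes `a_{k+1} - a_1`.
-/

namespace AlternatingMap

variable {R M N : Type*} [CommRing R] [AddCommGroup M] [Module R M] [AddCommGroup N] [Module R N]
  {m : ℕ}

theorem map_cons_add_of_mem_span (f : M [⋀^Fin (m + 1)]→ₗ[R] N) (w : Fin m → M) (x : M)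
    {u : M} (hu : u ∈ Submodule.span R (Set.range w)) :
    f (Fin.cons (x + u) w) = f (Fin.cons x w) := by
  suffices f.curryLeft u w = 0 from
    (f.toMultilinearMap.cons_add w x u).trans (add_eq_left.mpr this)
  induction hu using Submodule.span_induction with
  | mem _ hu =>
    obtain ⟨j, rfl⟩ := hu
    exact f.map_eq_zero_of_eq (Fin.cons (w j) w) (i := 0) (j := j.succ) rfl
      (Fin.succ_ne_zero j).symm
  | zero => simp
  | add _ _ _ _ hx hy => simp [hx, hy]
  | smul _ _ _ hx => simp [hx]

theorem map_eq_prod_smul_of_upperTriangular (f : M [⋀^Fin m]→ₗ[R] N) (v w : Fin m → M)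
    (c : Fin m → R) (h : ∀ i, v i - c i • w i ∈ Submodule.span R (w '' Set.Ioi i)) :
    f v = (∏ i, c i) • f w := by
  induction m with
  | zero => simp [Subsingleton.elim v w]
  | succ m ih =>
    have htail (i : Fin m) : Fin.tail v i - Fin.tail c i • Fin.tail w i ∈
        Submodule.span R (Fin.tail w '' Set.Ioi i) := by
      have := h i.succ
      rwa [← Fin.image_succ_Ioi, Set.image_image] at this
    have hhead : v 0 - c 0 • w 0 ∈ Submodule.span R (Set.range (Fin.tail w)) := by
      have hIoi : Set.Ioi (0 : Fin (m + 1)) = Set.range Fin.succ := by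
        ext j; cases j using Fin.cases <;> simp [Fin.succ_pos]
      have := h 0
      rwa [hIoi, ← Set.range_comp] at this
    calc f v = f.curryLeft (v 0) (Fin.tail v) := congrArg f (Fin.cons_self_tail v).symm
      _ = (∏ i, Fin.tail c i) • f (Fin.cons (c 0 • w 0 + (v 0 - c 0 • w 0)) (Fin.tail w)) := by
        rw [ih _ _ _ _ htail, add_sub_cancel]; rfl
      _ = (∏ i, Fin.tail c i) • c 0 • f (Fin.cons (w 0) (Fin.tail w)) := by
        rw [map_cons_add_of_mem_span f _ _ hhead]
        exact congrArg _ (f.toMultilinearMap.cons_smul _ _ _)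
      _ = (∏ i, c i) • f w := by
        rw [Fin.cons_self_tail, Fin.prod_univ_succ, mul_comm, mul_smul]; rfl

theorem map_eq_prod_smul_of_lowerTriangular (f : M [⋀^Fin m]→ₗ[R] N) (v w : Fin m → M)
    (c : Fin m → R) (h : ∀ i, v i - c i • w i ∈ Submodule.span R (w '' Set.Iio i)) :
    f v = (∏ i, c i) • f w := by
  have hrev := (f.domDomCongr Fin.revPerm).map_eq_prod_smul_of_upperTriangular
    (v ∘ Fin.rev) (w ∘ Fin.rev) (c ∘ Fin.rev) fun i => by
      rw [Set.image_comp, Fin.image_rev, Fin.preimage_rev_Ioi]; exact h i.rev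
  simpa [Function.comp_def, Fintype.prod_equiv Fin.revPerm] using hrev

theorem map_succ_sub_eq_map_last_sub (f : M [⋀^Fin m]→ₗ[R] N) (a : Fin (m + 1) → M) :
    f (fun k => a k.succ - a k.castSucc) = f (fun k => a (Fin.last m) - a k.castSucc) := by
  rw [← one_smul R (f fun k => a (Fin.last m) - a k.castSucc), ← Finset.prod_const_one]
  refine f.map_eq_prod_smul_of_upperTriangular _ _ _ fun k => ?_
  rw [one_smul, sub_sub_sub_cancel_right]
  rcases Fin.eq_castSucc_or_eq_last k.succ with ⟨j, hj⟩ | hk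
  · rw [← neg_sub, hj]
    refine neg_mem (Submodule.subset_span ⟨j, ?_, rfl⟩)
    have := congrArg Fin.val hj
    simp only [Fin.val_succ, Fin.val_castSucc] at this
    exact Fin.lt_def.mpr (by omega)
  · simp [hk]

theorem map_succ_sub_eq_map_succ_sub_zero (f : M [⋀^Fin m]→ₗ[R] N) (a : Fin (m + 1) → M) :
    f (fun k => a k.succ - a k.castSucc) = f (fun k => a k.succ - a 0) := by
  rw [← one_smul R (f fun k => a k.succ - a 0), ← Finset.prod_const_one]
  refine f.map_eq_prod_smul_of_lowerTriangular _ _ _ fun k => ?_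
  rw [one_smul, sub_sub_sub_cancel_left]
  rcases Fin.eq_zero_or_eq_succ k.castSucc with hk | ⟨j, hj⟩
  · simp [hk]
  · rw [← neg_sub, hj]
    refine neg_mem (Submodule.subset_span ⟨j, ?_, rfl⟩)
    have := congrArg Fin.val hj
    simp only [Fin.val_succ, Fin.val_castSucc] at this
    exact Fin.lt_def.mpr (by omega)

end AlternatingMap

section Mirror

variable {E : Type*} [NormedAddCommGroup E] [InnerProductSpace ℝ E] [FiniteDimensional ℝ E]

theorem mirror_sub_sub_two_smul_mem_vectorSpan {s : Set E} {q : E} (hq : q ∈ s) (p : E) :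
    mirror s p - p - (2 : ℝ) • (q - p) ∈ vectorSpan ℝ s := by
  have : Nonempty (affineSpan ℝ s) := ⟨⟨q, subset_affineSpan ℝ s hq⟩⟩
  have hproj := (affineSpan ℝ s).direction.starProjection_apply_mem (p - q)
  rw [← direction_affineSpan, mirror, dif_pos ⟨q, hq⟩,
    reflection_apply_of_mem _ p (subset_affineSpan ℝ s hq), Submodule.reflection_apply,
    vsub_eq_sub, vadd_eq_add]
  convert Submodule.smul_mem _ (2 : ℝ) hproj using 1
  module

theorem mirrored_sub_sub_two_smul_mem_span {m : ℕ} (a : Fin (m + 2) → E) (i : Fin m) :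
    mirrored (m + 1) a i - a i.castSucc.castSucc -
        (2 : ℝ) • (a (Fin.last _) - a i.castSucc.castSucc) ∈ Submodule.span ℝ
        ((fun k : Fin (m + 1) => a (Fin.last _) - a k.castSucc) '' Set.Ioi i.castSucc) := by
  set S := a '' {j | Fin.castLE (by omega) i < j}
  have hlast : a (Fin.last _) ∈ S := ⟨Fin.last _, Fin.castSucc_lt_last i.castSucc, rfl⟩
  refine (vectorSpan_eq_span_vsub_set_left ℝ hlast ▸ Submodule.span_le.mpr ?_)
    (mirror_sub_sub_two_smul_mem_vectorSpan hlast _)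
  rintro _ ⟨_, ⟨j, hj, rfl⟩, rfl⟩
  cases j using Fin.lastCases with
  | last => simp
  | cast k => exact Submodule.subset_span ⟨k, Fin.castSucc_lt_castSucc_iff.mp hj, rfl⟩

theorem AlternatingMap.map_snoc_mirrored_sub {N : Type*} [AddCommGroup N] [Module ℝ N] {m : ℕ}
    (f : E [⋀^Fin (m + 1)]→ₗ[ℝ] N) (a : Fin (m + 2) → E) :
    f (Fin.snoc (fun i : Fin m => mirrored (m + 1) a i - a i.castSucc.castSucc)
        (a (Fin.last _) - a (Fin.last m).castSucc)) =
      (2 : ℝ) ^ m • f (fun k => a (Fin.last _) - a k.castSucc) := by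
  have hprod : ∏ k, (Fin.snoc (fun _ => 2) 1 : Fin (m + 1) → ℝ) k = 2 ^ m := by
    simp [Fin.prod_univ_castSucc]
  rw [← hprod]
  refine f.map_eq_prod_smul_of_upperTriangular _ _ _ fun k => ?_
  cases k using Fin.lastCases with
  | last => simp
  | cast i => simpa using mirrored_sub_sub_two_smul_mem_span a i

end Mirror

/-- For affinely independent points `a 0, …, a n` (`n ≥ 2`) in a finite-dimensional real inner
product space, in the exterior algebra one has
`(ā₁ − a₁) ∧ ⋯ ∧ (ā_{n−1} − a_{n−1}) ∧ (a_{n+1} − aₙ)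
  = 2^{n−1} • ((a₂ − a₁) ∧ (a₃ − a₁) ∧ ⋯ ∧ (a_{n+1} − a₁))`
(0-based indexing; wedge products are ordered products of `ι`-images). -/
theorem mirrored_wedge_eq_two_pow_smul_simplex_wedge
    {E : Type*} [NormedAddCommGroup E] [InnerProductSpace ℝ E] [FiniteDimensional ℝ E]
    (n : ℕ) (hn : 2 ≤ n) (a : Fin (n + 1) → E) :
    (List.ofFn fun i : Fin (n - 1) =>
        ι ℝ (mirrored n a i - a (Fin.castLE (by omega) i))).prod *
        ι ℝ (a (Fin.last n) - a ⟨n - 1, by omega⟩) =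
      (2 : ℝ) ^ (n - 1) •
        (List.ofFn fun j : Fin n => ι ℝ (a ⟨(j : ℕ) + 1, by omega⟩ - a 0)).prod := by
  obtain ⟨m, rfl⟩ : ∃ m, n = m + 1 := ⟨n - 1, by omega⟩
  have key := (ιMulti ℝ (m + 1)).map_snoc_mirrored_sub a
  rw [← AlternatingMap.map_succ_sub_eq_map_last_sub,
    AlternatingMap.map_succ_sub_eq_map_succ_sub_zero, ιMulti_apply, ιMulti_apply,
    List.ofFn_succ', List.prod_concat] at key
  simp only [Fin.snoc_castSucc, Fin.snoc_last] at key
  -- `m + 1 - 1` unfolds to `m`, and the indices of the statement to `castSucc`/`succ` forms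
  exact key
end

section
/- Let a₁, a₂, a₃, a₄ ∈ EuclideanSpace ℝ (Fin 3) be affinely independent, let ā₁ be the reflection of a₁ across the affine span of {a₂, a₃, a₄}, and let ā₂ be the reflection of a₂ across the affine span of {a₃, a₄}. Then the determinant of the 3×3 matrix whose rows are ā₁ − a₁, ā₂ − a₂, and a₄ − a₃ equals 4 times the determinant of the 3×3 matrix whose rows are a₂ − a₁, a₃ − a₁, and a₄ − a₁. -/
open EuclideanGeometry

/-!
Reflecting `p` across the affine span of `s` moves it by twice the vector to its orthogonal
projection, so for any `q ∈ s` the displacement `mirror s p - p` is `2 • (q - p)` modulo the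
direction of `s`. Hence the first two rows are `2 • (a₂ - a₁)` and `2 • (a₃ - a₂)` up to
combinations of the later rows, which do not change the determinant; and the rows
`a₂ - a₁, a₃ - a₂, a₄ - a₃` are obtained from `a₂ - a₁, a₃ - a₁, a₄ - a₁` by row operations.
-/

open Submodule

theorem mirror_sub_self_sub_mem_vectorSpan {E : Type*} [NormedAddCommGroup E]
    [InnerProductSpace ℝ E] [FiniteDimensional ℝ E] {s : Set E} {q : E} (hq : q ∈ s) (p : E) :
    mirror s p - p - (2 : ℝ) • (q - p) ∈ vectorSpan ℝ s := by
  have hs : s.Nonempty := ⟨q, hq⟩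
  have : Nonempty (affineSpan ℝ s) := ((affineSpan_nonempty ℝ).mpr hs).to_subtype
  set x : E := (EuclideanGeometry.orthogonalProjection (affineSpan ℝ s) p : E)
  have hx : x - q ∈ vectorSpan ℝ s := by
    rw [← direction_affineSpan]
    exact AffineSubspace.vsub_mem_direction (EuclideanGeometry.orthogonalProjection _ p).2
      (mem_affineSpan ℝ hq)
  rw [mirror, dif_pos hs, reflection_apply']
  convert smul_mem _ (2 : ℝ) hx using 1
  simp only [vsub_eq_sub, vadd_eq_add, x]
  module

theorem vectorSpan_triple_le_span {V : Type*} [AddCommGroup V] [Module ℝ V] (a b c : V) :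
    vectorSpan ℝ {a, b, c} ≤ span ℝ {b - a, c - b} := by
  rw [vectorSpan_eq_span_vsub_set_right ℝ (Set.mem_insert a _), span_le]
  rintro _ ⟨x, hx, rfl⟩
  dsimp only
  rcases hx with rfl | rfl | rfl
  · simp
  · exact subset_span (by simp)
  · rw [SetLike.mem_coe, vsub_eq_sub, ← sub_add_sub_cancel x b a]
    exact add_mem (subset_span (by simp)) (subset_span (by simp))

theorem det_of_rows_eq_mul_of_sub_mem_span {u v w u' v' : EuclideanSpace ℝ (Fin 3)} {c d : ℝ}
    (hu : u' - c • u ∈ span ℝ {v, w}) (hv : v' - d • v ∈ span ℝ {w}) :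
    (Matrix.of fun i j => (![u', v', w] i) j).det =
      c * d * (Matrix.of fun i j => (![u, v, w] i) j).det := by
  obtain ⟨α, β, hαβ⟩ := mem_span_pair.mp hu
  obtain ⟨t, ht⟩ := mem_span_singleton.mp hv
  obtain rfl : u' = c • u + (α • v + β • w) := by rw [hαβ]; abel
  obtain rfl : v' = d • v + t • w := by rw [ht]; abel
  simp only [Matrix.det_fin_three, Matrix.of_apply, Matrix.cons_val_zero, Matrix.cons_val_one,
    Matrix.cons_val, PiLp.add_apply, PiLp.smul_apply, smul_eq_mul]
  ring

theorem det_of_rows_consecutive_sub (a b c d : EuclideanSpace ℝ (Fin 3)) :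
    (Matrix.of fun i j => (![b - a, c - b, d - c] i) j).det =
      (Matrix.of fun i j => (![b - a, c - a, d - a] i) j).det := by
  simp only [Matrix.det_fin_three, Matrix.of_apply, Matrix.cons_val_zero, Matrix.cons_val_one,
    Matrix.cons_val, PiLp.sub_apply]
  ring

theorem mirrored_det_eq_four_mul_det_general
    (a₁ a₂ a₃ a₄ : EuclideanSpace ℝ (Fin 3)) :
    (Matrix.of fun i j =>
        (![mirror {a₂, a₃, a₄} a₁ - a₁, mirror {a₃, a₄} a₂ - a₂, a₄ - a₃] i) j).det =
      4 * (Matrix.of fun i j => (![a₂ - a₁, a₃ - a₁, a₄ - a₁] i) j).det := by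
  have h₁ := mirror_sub_self_sub_mem_vectorSpan (Set.mem_insert a₂ {a₃, a₄}) a₁
  have h₂ := mirror_sub_self_sub_mem_vectorSpan (Set.mem_insert a₃ {a₄}) a₂
  rw [vectorSpan_pair_rev, vsub_eq_sub] at h₂
  rw [det_of_rows_eq_mul_of_sub_mem_span (vectorSpan_triple_le_span a₂ a₃ a₄ h₁) h₂,
    det_of_rows_consecutive_sub]
  norm_num

/-- For affinely independent `a₁, a₂, a₃, a₄` in `EuclideanSpace ℝ (Fin 3)`, with `ā₁` the
reflection of `a₁` across the affine span of `{a₂, a₃, a₄}` and `ā₂` the reflection of `a₂`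
across the affine span of `{a₃, a₄}`, the determinant of the matrix with rows
`ā₁ − a₁`, `ā₂ − a₂`, `a₄ − a₃` is four times the determinant of the matrix with rows
`a₂ − a₁`, `a₃ − a₁`, `a₄ − a₁`. -/
theorem mirrored_det_eq_four_mul_det
    (a₁ a₂ a₃ a₄ : EuclideanSpace ℝ (Fin 3))
    (h : AffineIndependent ℝ ![a₁, a₂, a₃, a₄]) :
    (Matrix.of fun i j =>
        (![mirror {a₂, a₃, a₄} a₁ - a₁, mirror {a₃, a₄} a₂ - a₂, a₄ - a₃] i) j).det =
      4 * (Matrix.of fun i j => (![a₂ - a₁, a₃ - a₁, a₄ - a₁] i) j).det :=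
  mirrored_det_eq_four_mul_det_general a₁ a₂ a₃ a₄
end

section
/- Let E be a real inner product space, and let a, b, c ∈ E with b ≠ c. Then the reflection of a across the affine span of {b, c} is given by the explicit formula reflection (affineSpan ℝ {b, c}) a = 2 • b − (2⟪c − b, b − a⟫/‖c − b‖²) • (c − b) − a. -/
open EuclideanGeometry
open scoped InnerProductSpace

namespace EuclideanGeometry

variable {𝕜 V P : Type*} [RCLike 𝕜] [NormedAddCommGroup V] [InnerProductSpace 𝕜 V]
  [MetricSpace P] [NormedAddTorsor V P]

theorem direction_affineSpan_pair (p₁ p₂ : P) :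
    (line[𝕜, p₁, p₂]).direction = 𝕜 ∙ (p₂ -ᵥ p₁) := by
  rw [direction_affineSpan, vectorSpan_pair_rev]

theorem reflection_affineSpan_pair_apply (p₁ p₂ p : P) :
    reflection line[𝕜, p₁, p₂] p =
      ((2 * ⟪p₂ -ᵥ p₁, p -ᵥ p₁⟫_𝕜 / (‖p₂ -ᵥ p₁‖ : 𝕜) ^ 2) • (p₂ -ᵥ p₁) - (p -ᵥ p₁)) +ᵥ p₁ := by
  rw [reflection_apply_of_mem _ p (left_mem_affineSpan_pair 𝕜 p₁ p₂)]
  simp_rw [direction_affineSpan_pair]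
  rw [Submodule.reflection_singleton_apply, mul_div_assoc, mul_smul, two_smul 𝕜, two_smul ℕ]

end EuclideanGeometry

/-- Explicit formula for the reflection of a point `a` across the affine span of two distinct
points `b`, `c` in a real inner product space:
`reflection (affineSpan ℝ {b, c}) a = 2 • b − (2⟪c − b, b − a⟫/‖c − b‖²) • (c − b) − a`. -/
theorem reflection_affineSpan_pair_eq
    {E : Type*} [NormedAddCommGroup E] [InnerProductSpace ℝ E]
    (a b c : E) :
    haveI : Nonempty (affineSpan ℝ ({b, c} : Set E)) :=
      ⟨⟨b, mem_affineSpan ℝ (Set.mem_insert b {c})⟩⟩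
    haveI : Submodule.HasOrthogonalProjection (affineSpan ℝ ({b, c} : Set E)).direction := by
      rw [direction_affineSpan, vectorSpan_pair]
      infer_instance
    EuclideanGeometry.reflection (affineSpan ℝ {b, c}) a =
      (2 : ℝ) • b - (2 * ⟪c - b, b - a⟫_ℝ / ‖c - b‖ ^ 2) • (c - b) - a := by
  rw [reflection_affineSpan_pair_apply, RCLike.ofReal_real_eq_id, id, vsub_eq_sub, vsub_eq_sub,
    vadd_eq_add, ← neg_sub a b, inner_neg_right]
  module
end

section
/- Let k ≥ 1, let Q be the standard quadratic form Q(v) = Σᵢ (v i)² on EuclideanSpace ℝ (Fin k), and let ι : EuclideanSpace ℝ (Fin k) → CliffordAlgebra Q be the canonical embedding. For vectors u₁, …, u_k ∈ EuclideanSpace ℝ (Fin k), let M be the k×k matrix with entries M i j = uᵢ j. Then Σ_{σ ∈ Perm(Fin k)} (sign σ) • (ι(u_{σ(1)}) * ι(u_{σ(2)}) * ⋯ * ι(u_{σ(k)})) = (k! · det M) • (ι(e₁) * ι(e₂) * ⋯ * ι(e_k)), where e₁, …, e_k is the standard orthonormal basis; equivalently, the k-blade u₁ ∧ ⋯ ∧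 u_k (the antisymmetrized geometric product) equals det M times the pseudo-scalar I_k = e₁⋯e_k. -/
/-!
The antisymmetrized product is the alternatization of the multilinear map
`v ↦ ι v₁ ⋯ ι v_k`, so it is an alternating map in `k` variables on a `k`-dimensional space and
therefore equals `det M` times its value on the standard basis. The basis vectors are pairwise
orthogonal, so their images anticommute in the Clifford algebra, and each of the `k!` terms of
the sum at the basis is `sign σ • sign σ • e₁ ⋯ e_k = e₁ ⋯ e_k`.
-/

open CliffordAlgebra

/-- The standard quadratic form `Q v = Σ i, (v i)² = ⟪v, v⟫` on `EuclideanSpace ℝ (Fin k)`. -/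
noncomputable def Qstd (k : ℕ) : QuadraticForm ℝ (EuclideanSpace ℝ (Fin k)) :=
  LinearMap.BilinMap.toQuadraticMap (innerₗ (EuclideanSpace ℝ (Fin k)))

open Equiv Equiv.Perm

section Anticommuting

variable {A : Type*} [Ring A]

theorem prod_ofFn_comp_swap_castSucc_succ {n : ℕ} (w : Fin (n + 1) → A) (i : Fin n)
    (h : w i.castSucc * w i.succ = -(w i.succ * w i.castSucc)) :
    (List.ofFn (w ∘ swap i.castSucc i.succ)).prod = -(List.ofFn w).prod := by
  induction n with
  | zero => exact i.elim0
  | succ n ih =>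
    cases i using Fin.cases with
    | zero =>
      have hswap (j : Fin n) : swap (0 : Fin (n + 2)) 1 j.succ.succ = j.succ.succ :=
        swap_apply_of_ne_of_ne (Fin.succ_ne_zero _) (Fin.succ_succ_ne_one _)
      simp only [Fin.castSucc_zero, Fin.succ_zero_eq_one] at h ⊢
      simp only [List.ofFn_succ, Function.comp_apply, swap_apply_left, Fin.succ_zero_eq_one,
        swap_apply_right, hswap, List.prod_cons, ← mul_assoc, h, neg_mul, neg_neg]
    | succ i =>
      rw [← Fin.succ_castSucc] at h ⊢
      have hhead : swap i.castSucc.succ i.succ.succ 0 = 0 :=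
        swap_apply_of_ne_of_ne (Fin.succ_ne_zero _).symm (Fin.succ_ne_zero _).symm
      have htail : (fun j : Fin (n + 1) => w (swap i.castSucc.succ i.succ.succ j.succ)) =
          (fun j => w j.succ) ∘ swap i.castSucc i.succ := by
        funext j
        simp only [Function.comp_apply, (Fin.succ_injective _).swap_apply]
      rw [List.ofFn_succ, List.ofFn_succ (f := w), List.prod_cons, List.prod_cons,
        Function.comp_apply, hhead]
      simp only [Function.comp_apply]
      rw [htail, ih _ _ h, mul_neg]

theorem prod_ofFn_comp_perm_of_anticommute {n : ℕ} {w : Fin n → A}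
    (hw : Pairwise fun i j => w i * w j = -(w j * w i)) (σ : Perm (Fin n)) :
    (List.ofFn (w ∘ σ)).prod = sign σ • (List.ofFn w).prod := by
  cases n with
  | zero => simp [Subsingleton.elim σ 1]
  | succ n =>
    have hσ : σ ∈ Submonoid.closure (Set.range fun i : Fin n ↦ swap i.castSucc i.succ) := by
      rw [mclosure_swap_castSucc_succ]; trivial
    induction hσ using Submonoid.closure_induction generalizing w with
    | mem _ hσ =>
      obtain ⟨i, rfl⟩ := hσ
      have hne : i.castSucc ≠ i.succ := Fin.castSucc_lt_succ.ne
      rw [prod_ofFn_comp_swap_castSucc_succ w i (hw hne), sign_swap hne, Units.neg_smul, one_smul]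
    | one => simp
    | mul σ τ _ _ hσ hτ =>
      rw [Perm.coe_mul, ← Function.comp_assoc,
        hτ (w := w ∘ σ) fun i j hij => hw (σ.injective.ne hij), hσ hw, Perm.sign_mul, mul_comm,
        mul_smul]

end Anticommuting

theorem AlternatingMap.apply_eq_basis_det_smul {R M N ι : Type*} [CommRing R] [AddCommGroup M]
    [Module R M] [AddCommGroup N] [Module R N] [Fintype ι] [DecidableEq ι]
    (e : Module.Basis ι R M) (f : M [⋀^ι]→ₗ[R] N) (v : ι → M) : f v = e.det v • f e := by
  suffices f = (LinearMap.toSpanSingleton R N (f e)).compAlternatingMap e.det from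
    DFunLike.congr_fun this v
  refine e.ext_alternating fun i hi => ?_
  let σ : Perm ι := Equiv.ofBijective i (Finite.injective_iff_bijective.1 hi)
  change f (e ∘ σ) = LinearMap.toSpanSingleton R N (f e) (e.det (e ∘ σ))
  rw [AlternatingMap.map_perm, AlternatingMap.map_perm,
    Module.Basis.det_self, LinearMap.toSpanSingleton_apply, smul_one_smul]

namespace CliffordAlgebra

variable {R M : Type*} [CommRing R] [AddCommGroup M] [Module R M] (Q : QuadraticForm R M)

def blade (n : ℕ) : M [⋀^Fin n]→ₗ[R] CliffordAlgebra Q :=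
  MultilinearMap.alternatization
    ((MultilinearMap.mkPiAlgebraFin R n (CliffordAlgebra Q)).compLinearMap fun _ => ι Q)

theorem blade_apply {n : ℕ} (v : Fin n → M) :
    blade Q n v = ∑ σ : Perm (Fin n), sign σ • (List.ofFn fun i => ι Q (v (σ i))).prod := by
  simp [blade, MultilinearMap.alternatization_apply]

theorem blade_eq_factorial_smul_prod_of_pairwise_isOrtho {n : ℕ} {v : Fin n → M}
    (hv : Pairwise fun i j => Q.IsOrtho (v i) (v j)) :
    blade Q n v = n.factorial • (List.ofFn fun i => ι Q (v i)).prod := by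
  have hanti : Pairwise fun i j => ι Q (v i) * ι Q (v j) = -(ι Q (v j) * ι Q (v i)) :=
    fun i j hij => ι_mul_ι_comm_of_isOrtho (hv hij)
  have hterm (σ : Perm (Fin n)) :
      sign σ • (List.ofFn fun i => ι Q (v (σ i))).prod = (List.ofFn fun i => ι Q (v i)).prod := by
    change sign σ • (List.ofFn ((fun i => ι Q (v i)) ∘ σ)).prod = _
    rw [prod_ofFn_comp_perm_of_anticommute hanti σ, smul_smul, Int.units_mul_self, one_smul]
  rw [blade_apply, Finset.sum_congr rfl fun σ _ => hterm σ, Finset.sum_const, Finset.card_univ,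
    Fintype.card_perm, Fintype.card_fin]

end CliffordAlgebra

theorem qstd_isOrtho_iff {k : ℕ} {x y : EuclideanSpace ℝ (Fin k)} :
    (Qstd k).IsOrtho x y ↔ inner ℝ x y = 0 :=
  LinearMap.BilinForm.toQuadraticMap_isOrtho isSymm_inner

theorem EuclideanSpace.basisFun_toBasis_det_apply {ι 𝕜 : Type*} [Fintype ι] [DecidableEq ι]
    [RCLike 𝕜] (u : ι → EuclideanSpace 𝕜 ι) :
    (EuclideanSpace.basisFun ι 𝕜).toBasis.det u = (Matrix.of fun i j => u i j).det := by
  rw [Module.Basis.det_apply, ← Matrix.det_transpose]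
  rfl

theorem antisymmetrized_product_eq_det_smul_pseudoscalar_general
    (k : ℕ) (u : Fin k → EuclideanSpace ℝ (Fin k)) :
    ∑ σ : Equiv.Perm (Fin k),
        (((Equiv.Perm.sign σ : ℤ) : ℝ) •
          (List.ofFn fun i : Fin k => ι (Qstd k) (u (σ i))).prod) =
      ((k.factorial : ℝ) * (Matrix.of fun i j => u i j).det) •
        (List.ofFn fun i : Fin k => ι (Qstd k) (EuclideanSpace.single i (1 : ℝ))).prod := by
  set e := (EuclideanSpace.basisFun (Fin k) ℝ).toBasis
  have he_ortho : Pairwise fun i j => (Qstd k).IsOrtho (e i) (e j) := fun i j hij =>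
    qstd_isOrtho_iff.2 ((EuclideanSpace.basisFun (Fin k) ℝ).orthonormal.inner_eq_zero hij)
  calc _ = blade (Qstd k) k u := by simp only [blade_apply, Units.smul_def, Int.cast_smul_eq_zsmul]
    _ = e.det u • blade (Qstd k) k e := AlternatingMap.apply_eq_basis_det_smul e _ u
    _ = _ := by
      rw [blade_eq_factorial_smul_prod_of_pairwise_isOrtho _ he_ortho,
        EuclideanSpace.basisFun_toBasis_det_apply, ← Nat.cast_smul_eq_nsmul ℝ, smul_smul, mul_comm]
      simp only [e, OrthonormalBasis.coe_toBasis, EuclideanSpace.basisFun_apply]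

/-- In the Clifford algebra of the standard quadratic form on `EuclideanSpace ℝ (Fin k)`
(`k ≥ 1`), the antisymmetrized geometric product of vectors `u₁, …, u_k` equals
`k! · det M` times the pseudo-scalar `I_k = e₁ ⋯ e_k`, where `M i j = uᵢ j` and the `eᵢ`
are the standard basis vectors. -/
theorem antisymmetrized_product_eq_det_smul_pseudoscalar
    (k : ℕ) (hk : 1 ≤ k) (u : Fin k → EuclideanSpace ℝ (Fin k)) :
    ∑ σ : Equiv.Perm (Fin k),
        (((Equiv.Perm.sign σ : ℤ) : ℝ) •
          (List.ofFn fun i : Fin k => ι (Qstd k) (u (σ i))).prod) =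
      ((k.factorial : ℝ) * (Matrix.of fun i j => u i j).det) •
        (List.ofFn fun i : Fin k => ι (Qstd k) (EuclideanSpace.single i (1 : ℝ))).prod :=
  antisymmetrized_product_eq_det_smul_pseudoscalar_general k u
end
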